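/- Chen's composition formula for iterated integrals: for every k ≥ 1, continuous functions f₁,…,f_k : ℝ → A, and real numbers a ≤ b ≤ c, one has I(f₁,…,f_k; a, c) = Σ_{i=0}^{k} I(f₁,…,f_i; a, b) · I(f_{i+1},…,f_k; b, c). (This underlies the multiplicativity ⟨T_ω, γ∘δ⟩ = ⟨T_ω, γ⟩·⟨T_ω, δ⟩ of the transport of a formal power series connection under composition of 1-paths.) -/

import Mathlib

open MeasureTheory

variable {A : Type*} [NormedRing A] [NormedAlgebra ℝ A] [CompleteSpace A]

/-- The simplex `{t : ℝᵏ | a ≤ t 0 ≤ t 1 ≤ ⋯ ≤ t (k-1) ≤ b}`. -/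
def simplexSet (k : ℕ) (a b : ℝ) : Set (Fin k → ℝ) :=
  {t | Monotone t ∧ ∀ i, t i ∈ Set.Icc a b}

/-- The iterated integral `I(f₁, …, f_k; a, b)` of a list of functions `fs = [f₁, …, f_k]`,
as a Bochner integral of the (noncommutative, ordered) product `f₁ (t₁) ⋯ f_k (t_k)` over
the simplex `a ≤ t₁ ≤ ⋯ ≤ t_k ≤ b` with respect to Lebesgue measure.  For `k = 0` this
is the integral of the empty product `1` over the one-point space `Fin 0 → ℝ` of total
measure `1`, i.e. it equals `1`. -/
noncomputable def iterInt (fs : List (ℝ → A)) (a b : ℝ) : A :=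
  ∫ t in simplexSet fs.length a b, (List.ofFn fun i => fs.get i (t i)).prod

/-!
Splitting off the first variable identifies `I(f :: fs; a, b)` with `∫_a^b f(s) · I(fs; s, b) ds`:
under `ℝᵏ⁺¹ ≃ ℝ × ℝᵏ`, `t ↦ (t₀, (t₁, …, t_k))`, the simplex over `[a, b]` becomes the set of pairs
`(s, u)` with `s ∈ [a, b]` and `u` in the simplex over `[s, b]`, and Fubini applies. Chen's formula
then follows by induction on the list: split `∫_a^c` at `b`; the part over `[b, c]` is the `i = 0`
term `I(f :: fs; b, c)`, and on `[a, b]` expanding `I(fs; s, c)` by the induction hypothesis and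
folding each term back with the first-variable formula gives the terms `i ≥ 1`.
-/

namespace MeasureTheory

variable {α β E : Type*} [MeasurableSpace α] [MeasurableSpace β]
  [NormedAddCommGroup E] [NormedSpace ℝ E] {μ : Measure α} {ν : Measure β}
  {s : Set α} {t : α → Set β} {f : α × β → E}

lemma integral_indicator_setOf_fst_mem_snd_mem
    (hT : MeasurableSet {p : α × β | p.1 ∈ s ∧ p.2 ∈ t p.1}) (x : α) :
    ∫ y, {p : α × β | p.1 ∈ s ∧ p.2 ∈ t p.1}.indicator f (x, y) ∂ν =
      s.indicator (fun x => ∫ y in t x, f (x, y) ∂ν) x := by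
  by_cases hx : x ∈ s
  · have hfiber : Prod.mk x ⁻¹' {p : α × β | p.1 ∈ s ∧ p.2 ∈ t p.1} = t x := by
      ext y; simp [hx]
    have ht : MeasurableSet (t x) := hfiber ▸ measurable_prodMk_left hT
    rw [Set.indicator_of_mem hx, ← integral_indicator ht, ← hfiber]
    simp_rw [← Set.indicator_comp_right (Prod.mk x)]
    rfl
  · simp [Set.indicator, hx]

lemma IntegrableOn.integrableOn_setIntegral_fiber [SFinite ν] (hs : MeasurableSet s)
    (hT : MeasurableSet {p : α × β | p.1 ∈ s ∧ p.2 ∈ t p.1})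
    (hf : IntegrableOn f {p : α × β | p.1 ∈ s ∧ p.2 ∈ t p.1} (μ.prod ν)) :
    IntegrableOn (fun x => ∫ y in t x, f (x, y) ∂ν) s μ := by
  have := ((integrable_indicator_iff hT).2 hf).integral_prod_left
  simp_rw [integral_indicator_setOf_fst_mem_snd_mem hT] at this
  exact (integrable_indicator_iff hs).1 this

lemma setIntegral_setOf_fst_mem_snd_mem [SFinite μ] [SFinite ν] (hs : MeasurableSet s)
    (hT : MeasurableSet {p : α × β | p.1 ∈ s ∧ p.2 ∈ t p.1})
    (hf : IntegrableOn f {p : α × β | p.1 ∈ s ∧ p.2 ∈ t p.1} (μ.prod ν)) :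
    ∫ p in {p : α × β | p.1 ∈ s ∧ p.2 ∈ t p.1}, f p ∂μ.prod ν =
      ∫ x in s, ∫ y in t x, f (x, y) ∂ν ∂μ := by
  rw [← integral_indicator hT, integral_prod _ ((integrable_indicator_iff hT).2 hf),
    ← integral_indicator hs]
  simp_rw [integral_indicator_setOf_fst_mem_snd_mem hT]

end MeasureTheory

lemma intervalIntegral.integral_mul_const_of_intervalIntegrable {R : Type*} [NormedRing R]
    [NormedAlgebra ℝ R] [CompleteSpace R] {g : ℝ → R} {a b : ℝ}
    (hg : IntervalIntegrable g volume a b) (x : R) :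
    ∫ s in a..b, g s * x = (∫ s in a..b, g s) * x :=
  ((ContinuousLinearMap.mul ℝ R).flip x).intervalIntegral_comp_comm hg

section ProdOfFn

variable {X M : Type*} [Monoid M] {fs : List (X → M)}

lemma prod_ofFn_get_cons (f : X → M) (t : Fin (fs.length + 1) → X) :
    (List.ofFn fun i => (f :: fs).get i (t i)).prod =
      f (t 0) * (List.ofFn fun i => fs.get i (Fin.tail t i)).prod := by
  simp only [List.length_cons, List.get_eq_getElem, List.ofFn_succ, Fin.coe_ofNat_eq_mod,
    Nat.zero_mod, Fin.val_succ, List.getElem_cons_succ, List.prod_cons]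
  rfl

lemma prod_ofFn_get_cons_piFinSuccAbove [MeasurableSpace X] (f : X → M)
    (t : Fin (fs.length + 1) → X) :
    f (MeasurableEquiv.piFinSuccAbove (fun _ => X) 0 t).1 *
        (List.ofFn fun i => fs.get i ((MeasurableEquiv.piFinSuccAbove (fun _ => X) 0 t).2 i)).prod =
      (List.ofFn fun i => (f :: fs).get i (t i)).prod := by
  rw [prod_ofFn_get_cons]
  simp

lemma continuous_prod_ofFn_get [TopologicalSpace X] [TopologicalSpace M] [ContinuousMul M]
    (hfs : ∀ f ∈ fs, Continuous f) :
    Continuous fun t : Fin fs.length → X => (List.ofFn fun i => fs.get i (t i)).prod := by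
  simp only [List.ofFn_eq_map]
  exact continuous_list_prod _ fun i _ => (hfs _ (fs.get_mem i)).comp (continuous_apply i)

end ProdOfFn

section Simplex

lemma simplexSet_eq_inter_pi (k : ℕ) (a b : ℝ) :
    simplexSet k a b = {t | Monotone t} ∩ Set.univ.pi fun _ => Set.Icc a b := by
  ext t
  simp only [simplexSet, Set.mem_inter_iff, Set.mem_univ_pi]
  rfl

lemma isClosed_simplexSet (k : ℕ) (a b : ℝ) : IsClosed (simplexSet k a b) := by
  rw [simplexSet_eq_inter_pi]
  exact isClosed_monotone.inter (isClosed_set_pi fun _ _ => isClosed_Icc)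

lemma isCompact_simplexSet (k : ℕ) (a b : ℝ) : IsCompact (simplexSet k a b) := by
  rw [simplexSet_eq_inter_pi, Set.inter_comm]
  exact (isCompact_univ_pi fun _ => isCompact_Icc).inter_right isClosed_monotone

lemma simplexSet_zero (a b : ℝ) : simplexSet 0 a b = Set.univ :=
  Set.eq_univ_of_forall fun _ => ⟨fun i => i.elim0, fun i => i.elim0⟩

lemma cons_mem_simplexSet_succ_iff {k : ℕ} {a b s : ℝ} {u : Fin k → ℝ} :
    Fin.cons s u ∈ simplexSet (k + 1) a b ↔ s ∈ Set.Icc a b ∧ u ∈ simplexSet k s b := by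
  simp only [simplexSet, Monotone, Fin.forall_fin_succ, Set.mem_ofPred_eq, Fin.cons_zero,
    Fin.cons_succ, Fin.succ_le_succ_iff, Fin.le_zero_iff, Fin.zero_le, Fin.succ_ne_zero,
    Set.mem_Icc, le_refl, true_imp_iff, false_imp_iff, true_and]
  constructor
  · rintro ⟨⟨hsu, hu⟩, hs, hub⟩
    exact ⟨hs, hu, fun i => ⟨hsu i, (hub i).2⟩⟩
  · rintro ⟨hs, hu, hsub⟩
    exact ⟨⟨fun i => (hsub i).1, hu⟩, hs, fun i => ⟨hs.1.trans (hsub i).1, (hsub i).2⟩⟩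

lemma piFinSuccAbove_zero_preimage_simplexSet (k : ℕ) (a b : ℝ) :
    MeasurableEquiv.piFinSuccAbove (fun _ : Fin (k + 1) => ℝ) 0 ⁻¹'
        {p | p.1 ∈ Set.Icc a b ∧ p.2 ∈ simplexSet k p.1 b} = simplexSet (k + 1) a b := by
  ext t
  refine Fin.consCases (fun s u => ?_) t
  simp [cons_mem_simplexSet_succ_iff]

lemma measurableSet_setOf_mem_Icc_mem_simplexSet (k : ℕ) (a b : ℝ) :
    MeasurableSet {p : ℝ × (Fin k → ℝ) | p.1 ∈ Set.Icc a b ∧ p.2 ∈ simplexSet k p.1 b} := by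
  rw [← (MeasurableEquiv.piFinSuccAbove (fun _ : Fin (k + 1) => ℝ) 0).measurableSet_preimage,
    piFinSuccAbove_zero_preimage_simplexSet]
  exact (isClosed_simplexSet _ a b).measurableSet

end Simplex

section IterInt

variable {R : Type*} [NormedRing R] {f : ℝ → R} {fs : List (ℝ → R)}

lemma integrableOn_prod_ofFn_get (hfs : ∀ f ∈ fs, Continuous f) (a b : ℝ) :
    IntegrableOn (fun t : Fin fs.length → ℝ => (List.ofFn fun i => fs.get i (t i)).prod)
      (simplexSet fs.length a b) :=
  (continuous_prod_ofFn_get hfs).continuousOn.integrableOn_compact (isCompact_simplexSet _ a b)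

lemma integrableOn_setOf_mem_Icc_mem_simplexSet (hf : Continuous f)
    (hfs : ∀ g ∈ fs, Continuous g) (a b : ℝ) :
    IntegrableOn
      (fun p : ℝ × (Fin fs.length → ℝ) => f p.1 * (List.ofFn fun i => fs.get i (p.2 i)).prod)
      {p | p.1 ∈ Set.Icc a b ∧ p.2 ∈ simplexSet fs.length p.1 b} (volume.prod volume) := by
  rw [← Measure.volume_eq_prod,
    ← (volume_preserving_piFinSuccAbove (fun _ => ℝ) 0).integrableOn_comp_preimage
      (MeasurableEquiv.measurableEmbedding _),
    piFinSuccAbove_zero_preimage_simplexSet]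
  simp_rw [Function.comp_def, prod_ofFn_get_cons_piFinSuccAbove]
  exact integrableOn_prod_ofFn_get (fs := f :: fs) (by simpa using ⟨hf, hfs⟩) a b

variable [NormedAlgebra ℝ R]

lemma integrableOn_mul_iterInt (hf : Continuous f) (hfs : ∀ g ∈ fs, Continuous g) (a b : ℝ) :
    IntegrableOn (fun s => f s * iterInt fs s b) (Set.Icc a b) := by
  refine ((integrableOn_setOf_mem_Icc_mem_simplexSet hf hfs a b).integrableOn_setIntegral_fiber
    (t := fun s => simplexSet fs.length s b) measurableSet_Icc
    (measurableSet_setOf_mem_Icc_mem_simplexSet _ a b)).congr_fun (fun s _ => ?_) measurableSet_Icc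
  exact integral_const_mul_of_integrable (c := f s) (integrableOn_prod_ofFn_get hfs s b)

lemma iterInt_cons (hf : Continuous f) (hfs : ∀ g ∈ fs, Continuous g) {a b : ℝ} (hab : a ≤ b) :
    iterInt (f :: fs) a b = ∫ s in a..b, f s * iterInt fs s b := by
  have hchange : iterInt (f :: fs) a b =
      ∫ p in {p : ℝ × (Fin fs.length → ℝ) | p.1 ∈ Set.Icc a b ∧ p.2 ∈ simplexSet fs.length p.1 b},
        f p.1 * (List.ofFn fun i => fs.get i (p.2 i)).prod ∂volume.prod volume := by
    rw [← Measure.volume_eq_prod,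
      ← (volume_preserving_piFinSuccAbove (fun _ => ℝ) 0).setIntegral_preimage_emb
        (MeasurableEquiv.measurableEmbedding _),
      piFinSuccAbove_zero_preimage_simplexSet]
    simp_rw [prod_ofFn_get_cons_piFinSuccAbove]
    rfl
  rw [hchange, intervalIntegral.integral_of_le hab, ← integral_Icc_eq_integral_Ioc]
  refine (setIntegral_setOf_fst_mem_snd_mem (t := fun s => simplexSet fs.length s b)
    measurableSet_Icc (measurableSet_setOf_mem_Icc_mem_simplexSet _ a b)
    (integrableOn_setOf_mem_Icc_mem_simplexSet hf hfs a b)).trans ?_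
  refine setIntegral_congr_fun measurableSet_Icc fun s _ => ?_
  exact integral_const_mul_of_integrable (c := f s) (integrableOn_prod_ofFn_get hfs s b)

variable [CompleteSpace R]

lemma iterInt_nil (a b : ℝ) : iterInt ([] : List (ℝ → R)) a b = 1 := by
  simp [iterInt, simplexSet_zero, Measure.real, volume_pi]

lemma iterInt_cons_comp (hf : Continuous f) (hfs : ∀ g ∈ fs, Continuous g) {a b c : ℝ}
    (hab : a ≤ b) (hbc : b ≤ c)
    (ih : ∀ s ∈ Set.Icc a b, iterInt fs s c =
      ∑ i ∈ Finset.range (fs.length + 1), iterInt (fs.take i) s b * iterInt (fs.drop i) b c) :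
    iterInt (f :: fs) a c = ∑ i ∈ Finset.range (fs.length + 2),
      iterInt ((f :: fs).take i) a b * iterInt ((f :: fs).drop i) b c := by
  have hfs_take (i : ℕ) : ∀ g ∈ fs.take i, Continuous g :=
    fun g hg => hfs g (List.mem_of_mem_take hg)
  have hint_take (i : ℕ) :
      IntervalIntegrable (fun s => f s * iterInt (fs.take i) s b) volume a b :=
    (intervalIntegrable_iff_integrableOn_Icc_of_le hab).2
      (integrableOn_mul_iterInt hf (hfs_take i) a b)
  have hint := integrableOn_mul_iterInt hf hfs a c
  rw [iterInt_cons hf hfs (hab.trans hbc),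
    ← intervalIntegral.integral_add_adjacent_intervals (b := b)
      ((intervalIntegrable_iff_integrableOn_Icc_of_le hab).2
        (hint.mono_set (Set.Icc_subset_Icc_right hbc)))
      ((intervalIntegrable_iff_integrableOn_Icc_of_le hbc).2
        (hint.mono_set (Set.Icc_subset_Icc_left hab))),
    ← iterInt_cons hf hfs hbc, Finset.sum_range_succ', List.take_zero, List.drop_zero,
    iterInt_nil, one_mul]
  congr 1
  calc ∫ s in a..b, f s * iterInt fs s c
      = ∫ s in a..b, ∑ i ∈ Finset.range (fs.length + 1),
          f s * iterInt (fs.take i) s b * iterInt (fs.drop i) b c := by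
        refine intervalIntegral.integral_congr fun s hs => ?_
        rw [Set.uIcc_of_le hab] at hs
        simp only [ih s hs, Finset.mul_sum, mul_assoc]
    _ = ∑ i ∈ Finset.range (fs.length + 1),
          (∫ s in a..b, f s * iterInt (fs.take i) s b) * iterInt (fs.drop i) b c := by
        rw [intervalIntegral.integral_finsetSum fun i _ => (hint_take i).mul_const _]
        simp only [intervalIntegral.integral_mul_const_of_intervalIntegrable (hint_take _)]
    _ = _ := by
        simp only [← iterInt_cons hf (hfs_take _) hab, List.take_succ_cons, List.drop_succ_cons]

end IterInt

theorem iterInt_comp (fs : List (ℝ → A)) (hfs : ∀ f ∈ fs, Continuous f)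
    {a b c : ℝ} (hab : a ≤ b) (hbc : b ≤ c) :
    iterInt fs a c =
      ∑ i ∈ Finset.range (fs.length + 1),
        iterInt (fs.take i) a b * iterInt (fs.drop i) b c := by
  induction fs generalizing a with
  | nil => simp [iterInt_nil]
  | cons f fs ih =>
    have hf := hfs f List.mem_cons_self
    have hfs' : ∀ g ∈ fs, Continuous g := fun g hg => hfs g (List.mem_cons_of_mem f hg)
    exact iterInt_cons_comp hf hfs' hab hbc fun s hs => ih hfs' hs.2
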